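/- Let m ≥ 2 and N = 2m+1. In the symmetric group S_N define s_i = (i, i+1)(N−i, N+1−i) for 1 ≤ i ≤ m−1, and s_m = (m, m+2). For 1 ≤ d ≤ 2m−1 let w_d = s_1 ∘ s_2 ∘ ⋯ ∘ s_d if d ≤ m, and w_d = s_1 ∘ ⋯ ∘ s_{m−1} ∘ s_m ∘ s_{m−1} ∘ ⋯ ∘ s_{2m−d} if d > m (composition of functions). Then w_d⁻¹(1) = d+1 for 1 ≤ d ≤ m−1, and w_d⁻¹(1) = d+2 for m ≤ d ≤ 2m−1. In particular, 2 ≤ w_d⁻¹(1) ≤ 2m for 1 ≤ d ≤ 2m−2, while w_{2m−1}⁻¹(1) = N = 2m+1. -/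

import Mathlib

/-
Each `w_{d+1}` is `w_d` followed by one more simple reflection, so `w_{d+1}⁻¹(1)` is that
reflection applied to `w_d⁻¹(1)`. The point `1` is moved `1 → 2 → ⋯ → m` by `s_1, …, s_{m−1}`,
jumps to `m + 2` under `s_m`, and is then pushed `m + 2 → m + 3 → ⋯ → 2m + 1` by
`s_{m−1}, …, s_1` acting through their second transposition `(N − i, N + 1 − i)`.
-/

-- Permutations of ℕ fixing everything outside `{1, …, N}`, so that the paper's 1-based indexing
-- is kept verbatim.
namespace Stmt15

/-- The simple reflections: `s_i = (i, i+1)(N−i, N+1−i)` for `1 ≤ i ≤ m−1`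
and `s_m = (m, m+2)`, where `N = 2m+1`. -/
def s (m i : ℕ) : Equiv.Perm ℕ :=
  if i = m then Equiv.swap m (m + 2)
  else Equiv.swap i (i + 1) * Equiv.swap (2 * m + 1 - i) (2 * m + 2 - i)

/-- `w_d = s_1 ∘ ⋯ ∘ s_d` for `d ≤ m`, and
`w_d = s_1 ∘ ⋯ ∘ s_{m−1} ∘ s_m ∘ s_{m−1} ∘ ⋯ ∘ s_{2m−d}` for `d > m`. -/
def w (m d : ℕ) : Equiv.Perm ℕ :=
  if d ≤ m then ((List.range' 1 d).map (s m)).prod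
  else (((List.range' 1 m).map (s m)) ++
        ((List.range' (2 * m - d) (d - m)).reverse.map (s m))).prod

lemma s_inv_apply_of_lt {m i : ℕ} (h : i < m) : (s m i)⁻¹ i = i + 1 := by
  simp only [s, if_neg h.ne, mul_inv_rev, Equiv.swap_inv, Equiv.Perm.mul_apply,
    Equiv.swap_apply_left]
  exact Equiv.swap_apply_of_ne_of_ne (by omega) (by omega)

lemma s_inv_apply_reflect_of_lt {m i : ℕ} (h : i < m) :
    (s m i)⁻¹ (2 * m + 1 - i) = 2 * m + 2 - i := by
  simp only [s, if_neg h.ne, mul_inv_rev, Equiv.swap_inv, Equiv.Perm.mul_apply]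
  rw [Equiv.swap_apply_of_ne_of_ne (a := i) (by omega) (by omega), Equiv.swap_apply_left]

lemma s_self_inv_apply (m : ℕ) : (s m m)⁻¹ m = m + 2 := by
  simp [s]

lemma w_zero (m : ℕ) : w m 0 = 1 := by
  simp [w]

lemma w_succ_of_lt {m d : ℕ} (h : d < m) : w m (d + 1) = w m d * s m (d + 1) := by
  simp only [w, if_pos (Nat.succ_le_of_lt h), if_pos h.le, List.range'_1_concat, List.map_append,
    List.prod_append, List.map_singleton, List.prod_singleton, Nat.add_comm 1 d]

lemma w_of_le {m d : ℕ} (h : m ≤ d) :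
    w m d = (((List.range' 1 m).map (s m)) ++
      ((List.range' (2 * m - d) (d - m)).reverse.map (s m))).prod := by
  rcases h.eq_or_lt with rfl | hlt
  · simp [w]
  · simp [w, Nat.not_le.mpr hlt]

lemma w_succ_of_le {m d : ℕ} (h₁ : m ≤ d) (h₂ : d + 1 < 2 * m) :
    w m (d + 1) = w m d * s m (2 * m - d - 1) := by
  rw [w_of_le h₁, w_of_le (Nat.le_succ_of_le h₁),
    show d + 1 - m = (d - m) + 1 by omega, show 2 * m - (d + 1) = 2 * m - d - 1 by omega,
    List.range'_succ, show 2 * m - d - 1 + 1 = 2 * m - d by omega]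
  simp [mul_assoc]

lemma w_inv_apply_one_of_lt {m d : ℕ} (h : d < m) : (w m d)⁻¹ 1 = d + 1 := by
  induction d with
  | zero => simp [w_zero]
  | succ d ih =>
    rw [w_succ_of_lt (by omega), mul_inv_rev, Equiv.Perm.mul_apply, ih (by omega),
      s_inv_apply_of_lt h]

lemma w_inv_apply_one_of_le {m d : ℕ} (h₁ : m ≤ d) (h₂ : d < 2 * m) :
    (w m d)⁻¹ 1 = d + 2 := by
  induction d, h₁ using Nat.le_induction with
  | base =>
    obtain ⟨k, rfl⟩ : ∃ k, m = k + 1 := Nat.exists_eq_succ_of_ne_zero (by omega)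
    rw [w_succ_of_lt k.lt_succ_self, mul_inv_rev, Equiv.Perm.mul_apply,
      w_inv_apply_one_of_lt k.lt_succ_self, s_self_inv_apply]
  | succ d hd ih =>
    rw [w_succ_of_le hd h₂, mul_inv_rev, Equiv.Perm.mul_apply, ih (by omega),
      show d + 2 = 2 * m + 1 - (2 * m - d - 1) by omega,
      s_inv_apply_reflect_of_lt (by omega)]
    omega

theorem w_inv_one (m : ℕ) (hm : 2 ≤ m) :
    (∀ d, 1 ≤ d → d ≤ m - 1 → (w m d)⁻¹ 1 = d + 1) ∧
    (∀ d, m ≤ d → d ≤ 2 * m - 1 → (w m d)⁻¹ 1 = d + 2) ∧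
    (∀ d, 1 ≤ d → d ≤ 2 * m - 2 → 2 ≤ (w m d)⁻¹ 1 ∧ (w m d)⁻¹ 1 ≤ 2 * m) ∧
    (w m (2 * m - 1))⁻¹ 1 = 2 * m + 1 := by
  refine ⟨fun d _ hd => w_inv_apply_one_of_lt (by omega),
    fun d hd₁ hd₂ => w_inv_apply_one_of_le hd₁ (by omega), fun d hd₁ hd₂ => ?_, ?_⟩
  · rcases Nat.lt_or_ge d m with h | h
    · rw [w_inv_apply_one_of_lt h]; omega
    · rw [w_inv_apply_one_of_le h (by omega)]; omega
  · rw [w_inv_apply_one_of_le (by omega) (by omega)]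
    omega

end Stmt15
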